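/- A linear map T : ℤ^d → ℤ^d is complexity preserving (i.e., for every linear map Ψ : ℤ^d → ℤ^t the Green-Tao complexities of Ψ and Ψ∘T coincide) if and only if T(ℤ^d) has rank d. -/

import Mathlib

/-- The coefficient vector in `ℚ^d` of a linear form `ψ : ℤ^d → ℤ`. -/
noncomputable def coeffVec {d : ℕ} (ψ : (Fin d → ℤ) →+ ℤ) : Fin d → ℚ :=
  fun k => (ψ (Pi.single k 1) : ℚ)

/-- `P` is a Green-Tao partition of size `s` of the system `ψ` at `i`:
the forms `ψ j`, `j ≠ i`, are partitioned into `s+1` classes (the fibers of `P`),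
and `ψ i` does not lie in the `ℚ`-linear span of any class. -/
def IsGTPartition {d t : ℕ} (ψ : Fin t → ((Fin d → ℤ) →+ ℤ)) (i : Fin t) (s : ℕ)
    (P : {j : Fin t // j ≠ i} → Fin (s + 1)) : Prop :=
  ∀ k : Fin (s + 1),
    coeffVec (ψ i) ∉
      Submodule.span ℚ {v : Fin d → ℚ | ∃ j : {j : Fin t // j ≠ i}, P j = k ∧ v = coeffVec (ψ j.1)}

/-- The `i`-complexity of a system of linear forms: the least size of a Green-Tao
partition at `i`, or `∞` if there is none. -/
noncomputable def iComplexity {d t : ℕ} (ψ : Fin t → ((Fin d → ℤ) →+ ℤ)) (i : Fin t) : ℕ∞ :=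
  sInf {n : ℕ∞ | ∃ s : ℕ, (s : ℕ∞) = n ∧ ∃ P, IsGTPartition ψ i s P}

/-- The Green-Tao complexity of a system of linear forms. -/
noncomputable def GTComplexity {d t : ℕ} (ψ : Fin t → ((Fin d → ℤ) →+ ℤ)) : ℕ∞ :=
  ⨆ i : Fin t, iComplexity ψ i

/-!
The complexity of a system only sees the coefficient vectors of its forms, and only through
membership in spans, so it is unchanged by any injective `ℚ`-linear map applied to all of them.
Composing with `T` multiplies every coefficient vector by the integer matrix `M` of `T`, which is
injective over `ℚ` exactly when `det M ≠ 0`, i.e. when `T` is injective. If `T` is not injective,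
a nonzero integer vector `u` with `u M = 0` gives a nonzero form `φ` with `φ ∘ T = 0`: on its own
`φ` has complexity `0`, while the zero form lies in every span and has complexity `∞`.
-/

open Matrix

section

variable {d t : ℕ}

lemma AddMonoidHom.apply_eq_sum_mul_single (ψ : (Fin d → ℤ) →+ ℤ) (v : Fin d → ℤ) :
    ψ v = ∑ k, v k * ψ (Pi.single k 1) := by
  conv_lhs => rw [← Finset.univ_sum_single v]
  refine (map_sum ψ _ _).trans (Finset.sum_congr rfl fun k _ => ?_)
  rw [← smul_eq_mul, ← map_zsmul, ← Pi.single_smul', smul_eq_mul, mul_one]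

lemma coeffVec_eq_zero_iff (ψ : (Fin d → ℤ) →+ ℤ) : coeffVec ψ = 0 ↔ ψ = 0 := by
  refine ⟨fun h => ?_, fun h => by subst h; rfl⟩
  ext k
  simpa [coeffVec] using congrFun h k

lemma coeffVec_comp (T : (Fin d → ℤ) →+ (Fin d → ℤ)) (ψ : (Fin d → ℤ) →+ ℤ) :
    coeffVec (ψ.comp T) =
      coeffVec ψ ᵥ* (LinearMap.toMatrix' T.toIntLinearMap).map (Int.cast : ℤ → ℚ) := by
  funext k
  rw [coeffVec, AddMonoidHom.comp_apply, ψ.apply_eq_sum_mul_single]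
  simp [vecMul, dotProduct, coeffVec, LinearMap.toMatrix'_apply, mul_comm]

lemma isGTPartition_iff_of_coeffVec_eq_map {d' : ℕ} {ψ : Fin t → ((Fin d → ℤ) →+ ℤ)}
    {ψ' : Fin t → ((Fin d' → ℤ) →+ ℤ)} (f : (Fin d → ℚ) →ₗ[ℚ] (Fin d' → ℚ))
    (hf : Function.Injective f) (hψ : ∀ j, coeffVec (ψ' j) = f (coeffVec (ψ j)))
    (i : Fin t) (s : ℕ) (P : {j : Fin t // j ≠ i} → Fin (s + 1)) :
    IsGTPartition ψ' i s P ↔ IsGTPartition ψ i s P := by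
  refine forall_congr' fun k => not_congr ?_
  have hclass : {v | ∃ j : {j : Fin t // j ≠ i}, P j = k ∧ v = coeffVec (ψ' j.1)} =
      f '' {v | ∃ j : {j : Fin t // j ≠ i}, P j = k ∧ v = coeffVec (ψ j.1)} := by
    ext v
    simp [hψ, eq_comm]
  rw [hclass, hψ, Submodule.apply_mem_span_image_iff_mem_span hf]

lemma GTComplexity_eq_of_coeffVec_eq_map {d' : ℕ} {ψ : Fin t → ((Fin d → ℤ) →+ ℤ)}
    {ψ' : Fin t → ((Fin d' → ℤ) →+ ℤ)} (f : (Fin d → ℚ) →ₗ[ℚ] (Fin d' → ℚ))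
    (hf : Function.Injective f) (hψ : ∀ j, coeffVec (ψ' j) = f (coeffVec (ψ j))) :
    GTComplexity ψ' = GTComplexity ψ := by
  unfold GTComplexity iComplexity
  simp_rw [isGTPartition_iff_of_coeffVec_eq_map f hf hψ]

lemma iComplexity_eq_top_of_coeffVec_eq_zero (ψ : Fin t → ((Fin d → ℤ) →+ ℤ)) (i : Fin t)
    (hψ : coeffVec (ψ i) = 0) : iComplexity ψ i = ⊤ := by
  refine (congrArg sInf (Set.eq_empty_of_forall_notMem ?_)).trans sInf_empty
  rintro n ⟨s, -, P, hP⟩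
  exact hP 0 (hψ ▸ zero_mem _)

lemma GTComplexity_eq_top_of_coeffVec_eq_zero (ψ : Fin t → ((Fin d → ℤ) →+ ℤ)) (i : Fin t)
    (hψ : coeffVec (ψ i) = 0) : GTComplexity ψ = ⊤ :=
  top_le_iff.mp <| iComplexity_eq_top_of_coeffVec_eq_zero ψ i hψ ▸ le_iSup _ i

lemma GTComplexity_const_fin_one {χ : (Fin d → ℤ) →+ ℤ} (hχ : χ ≠ 0) :
    GTComplexity (fun _ : Fin 1 => χ) = 0 := by
  refine nonpos_iff_eq_zero.mp (iSup_le fun i => ?_)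
  have : IsEmpty {j : Fin 1 // j ≠ i} := ⟨fun j => j.2 (Subsingleton.elim _ _)⟩
  refine sInf_le ⟨0, rfl, isEmptyElim, fun k => ?_⟩
  simpa [coeffVec_eq_zero_iff] using hχ

lemma AddMonoidHom.toMatrix'_mulVec (T : (Fin d → ℤ) →+ (Fin d → ℤ)) (v : Fin d → ℤ) :
    LinearMap.toMatrix' T.toIntLinearMap *ᵥ v = T v :=
  LinearMap.toMatrix'_mulVec _ v

lemma AddMonoidHom.injective_iff_det_toMatrix'_ne_zero (T : (Fin d → ℤ) →+ (Fin d → ℤ)) :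
    Function.Injective T ↔ (LinearMap.toMatrix' T.toIntLinearMap).det ≠ 0 := by
  rw [Ne, ← exists_mulVec_eq_zero_iff, injective_iff_map_eq_zero]
  simp_rw [T.toMatrix'_mulVec, not_exists, not_and, not_imp_not]

lemma AddMonoidHom.exists_ne_zero_comp_eq_zero_of_not_injective
    (T : (Fin d → ℤ) →+ (Fin d → ℤ)) (hT : ¬Function.Injective T) :
    ∃ φ : (Fin d → ℤ) →+ ℤ, φ ≠ 0 ∧ φ.comp T = 0 := by
  rw [T.injective_iff_det_toMatrix'_ne_zero, not_not, ← exists_vecMul_eq_zero_iff] at hT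
  obtain ⟨u, hu, huT⟩ := hT
  refine ⟨AddMonoidHom.mk' (u ⬝ᵥ ·) (dotProduct_add u), fun h => hu ?_,
    AddMonoidHom.ext fun v => ?_⟩
  · ext k
    simpa using DFunLike.congr_fun h (Pi.single k 1)
  · show u ⬝ᵥ T v = 0
    rw [← T.toMatrix'_mulVec, dotProduct_mulVec, huT, zero_dotProduct]

end

lemma Matrix.vecMul_map_intCast_injective {n K : Type*} [Fintype n] [DecidableEq n] [Field K]
    [CharZero K] {M : Matrix n n ℤ} (hM : M.det ≠ 0) :
    Function.Injective fun v : n → K => v ᵥ* M.map Int.cast := by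
  rw [vecMul_injective_iff_isUnit, isUnit_iff_isUnit_det, isUnit_iff_ne_zero, ← Int.cast_det]
  exact_mod_cast hM

theorem complexity_preserving_iff_injective {d : ℕ}
    (T : (Fin d → ℤ) →+ (Fin d → ℤ)) :
    (∀ (t : ℕ) (ψ : Fin t → ((Fin d → ℤ) →+ ℤ)),
        GTComplexity (fun j => (ψ j).comp T) = GTComplexity ψ) ↔
      Function.Injective ⇑T := by
  constructor
  · intro h
    by_contra hT
    obtain ⟨φ, hφ, hφT⟩ := T.exists_ne_zero_comp_eq_zero_of_not_injective hT
    have h1 := h 1 fun _ => φ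
    rw [GTComplexity_eq_top_of_coeffVec_eq_zero _ 0 (by simp [hφT, coeffVec_eq_zero_iff]),
      GTComplexity_const_fin_one hφ] at h1
    exact ENat.top_ne_zero h1
  · intro hT t ψ
    have hM := T.injective_iff_det_toMatrix'_ne_zero.mp hT
    exact GTComplexity_eq_of_coeffVec_eq_map (vecMulLinear _)
      (vecMul_map_intCast_injective hM) fun j => coeffVec_comp T (ψ j)
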